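/- If f is (C, α, δ)-multicalibrated and ({X}, α)-multiaccurate, then for every S ∈ C, every level-set vector (j_1,...,j_L) ∈ {0,...,1/δ−1}^L, and every position k: |E_{x⃗∼D^n, i∼Unif[n]}[1_{x_i∈S}·1_{∀ℓ: f(x_i)_ℓ ∈ [j_ℓδ,(j_ℓ+1)δ)}·(Pr_{r_UA(f*(x⃗))}[i at rank k] − Pr_{r_UA(f(x⃗))}[i at rank k])]| ≤ L·n·α. -/

import Mathlib

open Finset

/-- An `n × L` matrix is row-stochastic (a prediction matrix) if every row is a
probability distribution over the `L` labels. Labels are ordered: a higher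
index in `Fin L` is a better label. -/
def rowStochastic {n L : ℕ} (P : Fin n → Fin L → ℝ) : Prop :=
  (∀ i ℓ, 0 ≤ P i ℓ) ∧ ∀ i, ∑ ℓ, P i ℓ = 1

/-- `N^{>ℓ}`: the number of individuals whose label is strictly better than `ℓ`
under the label assignment `lam`. -/
def nGT {n L : ℕ} (lam : Fin n → Fin L) (ℓ : Fin L) : ℕ :=
  (Finset.univ.filter fun j => ℓ < lam j).card

/-- `N^{=ℓ}`: the number of individuals whose label equals `ℓ`. -/
def nEQ {n L : ℕ} (lam : Fin n → Fin L) (ℓ : Fin L) : ℕ :=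
  (Finset.univ.filter fun j => lam j = ℓ).card

/-- `N^{>ℓ}_{−i}`: the number of individuals other than `i` whose label is
strictly better than `ℓ`. -/
def nGTm {n L : ℕ} (lam : Fin n → Fin L) (i : Fin n) (ℓ : Fin L) : ℕ :=
  ((Finset.univ.erase i).filter fun j => ℓ < lam j).card

/-- `N^{=ℓ}_{−i}`: the number of individuals other than `i` whose label equals
`ℓ`. -/
def nEQm {n L : ℕ} (lam : Fin n → Fin L) (i : Fin n) (ℓ : Fin L) : ℕ :=
  ((Finset.univ.erase i).filter fun j => lam j = ℓ).card

/-- Conditioned on the full label assignment `lam`, the probability that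
individual `i` receives (0-indexed) rank `k` when individuals are sorted by
decreasing label with uniform tie-breaking: it is `1 / N^{=λᵢ}` if
`N^{>λᵢ} ≤ k < N^{>λᵢ} + N^{=λᵢ}` and `0` otherwise. -/
noncomputable def condRank {n L : ℕ} (lam : Fin n → Fin L) (i k : Fin n) : ℝ :=
  if nGT lam (lam i) ≤ k.val ∧ k.val < nGT lam (lam i) + nEQ lam (lam i)
  then ((nEQ lam (lam i) : ℝ))⁻¹ else 0

/-- The uncertainty aware (UA) ranking function: `rUA P i k` is the probability
that individual `i` receives rank `k` when labels `λ_j ∼ P j` are drawn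
independently and individuals are ranked by decreasing label with uniform
tie-breaking. -/
noncomputable def rUA {n L : ℕ} (P : Fin n → Fin L → ℝ) : Fin n → Fin n → ℝ :=
  fun i k => ∑ lam : Fin n → Fin L, (∏ j, P j (lam j)) * condRank lam i k

/-- The probability, under the UA ranking for prediction matrix `P`, that
individual `i` receives rank `k`, conditioned on `λ_i = ℓ` (the labels of the
other individuals being drawn independently from the rows of `P`). -/
noncomputable def condProbGiven {n L : ℕ} (P : Fin n → Fin L → ℝ)
    (i k : Fin n) (ℓ : Fin L) : ℝ :=
  ∑ lam : Fin n → Fin L,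
    if lam i = ℓ then (∏ j ∈ Finset.univ.erase i, P j (lam j)) * condRank lam i k
    else 0

open scoped Classical

/-!
Both UA rank probabilities are multilinear in the rows of the prediction matrix and the rows of
the sample are independent, so restricting to `c (x_i)` and averaging over the sample turns each
of them into the UA rank probability of an expected prediction matrix (`maskedMean`). These two
expected matrices differ entrywise by at most `α`: row `i` by multicalibration, every other row by
multiaccuracy. A hybrid argument, exchanging one row at a time, then bounds the difference of the
rank probabilities by `n · L · α`, since the exchanged row contributes at most `L · α` and every
other row has ℓ¹-norm at most `1`.
-/

lemma condRank_nonneg {n L : ℕ} (lam : Fin n → Fin L) (i k : Fin n) : 0 ≤ condRank lam i k := by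
  unfold condRank
  split_ifs <;> positivity

lemma abs_condRank_le_one {n L : ℕ} (lam : Fin n → Fin L) (i k : Fin n) :
    |condRank lam i k| ≤ 1 := by
  rw [abs_of_nonneg (condRank_nonneg lam i k), condRank]
  split_ifs
  · have hi : 1 ≤ nEQ lam (lam i) := card_pos.mpr ⟨i, by simp⟩
    exact inv_le_one_of_one_le₀ (by exact_mod_cast hi)
  · exact zero_le_one

section Multilinear

variable {ι κ : Type*} [Fintype ι] [Fintype κ]

lemma prod_sub_prod_eq_sum_hybrid {R : Type*} [CommRing R] [LinearOrder ι] (a b : ι → R) :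
    ∏ j, a j - ∏ j, b j
      = ∑ t, ∏ j, if j < t then a j else if j = t then a j - b j else b j := by
  have h := prod_add_ordered univ b (fun j => a j - b j)
  simp only [add_sub_cancel] at h
  rw [h, add_sub_cancel_left]
  refine sum_congr rfl fun t _ => ?_
  rw [prod_filter, prod_filter, ← Fintype.prod_ite_eq' t (fun j => a j - b j),
    ← prod_mul_distrib, ← prod_mul_distrib]
  refine prod_congr rfl fun j _ => ?_
  rcases lt_trichotomy j t with h | rfl | h
  · simp [h, h.ne, h.not_gt]
  · simp
  · simp [h, h.ne', h.not_gt]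

lemma abs_sum_prod_mul_le_prod_sum_abs [DecidableEq ι] (B : ι → κ → ℝ) (w : (ι → κ) → ℝ)
    (hw : ∀ lam, |w lam| ≤ 1) :
    |∑ lam : ι → κ, (∏ j, B j (lam j)) * w lam| ≤ ∏ j, ∑ ℓ, |B j ℓ| := by
  rw [Fintype.prod_sum]
  refine (abs_sum_le_sum_abs _ _).trans (sum_le_sum fun lam _ => ?_)
  rw [abs_mul, abs_prod]
  exact mul_le_of_le_one_right (prod_nonneg fun _ _ => abs_nonneg _) (hw lam)

theorem abs_sum_prod_sub_prod_mul_le [LinearOrder ι] {P Q : ι → κ → ℝ} {α : ℝ}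
    (hP : ∀ j, ∑ ℓ, |P j ℓ| ≤ 1) (hQ : ∀ j, ∑ ℓ, |Q j ℓ| ≤ 1)
    (hPQ : ∀ j ℓ, |P j ℓ - Q j ℓ| ≤ α) (w : (ι → κ) → ℝ) (hw : ∀ lam, |w lam| ≤ 1) :
    |∑ lam : ι → κ, (∏ j, P j (lam j) - ∏ j, Q j (lam j)) * w lam|
      ≤ Fintype.card ι * Fintype.card κ * α := by
  let H (t j : ι) (ℓ : κ) : ℝ := if j < t then P j ℓ else if j = t then P j ℓ - Q j ℓ else Q j ℓ
  have hH : ∀ t, ∏ j, ∑ ℓ, |H t j ℓ| ≤ Fintype.card κ * α := by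
    intro t
    rw [← mul_prod_erase univ _ (mem_univ t)]
    have hrow_t : ∑ ℓ, |H t t ℓ| ≤ Fintype.card κ * α := by
      simpa [H] using sum_le_card_nsmul univ _ α fun ℓ _ => hPQ t ℓ
    have hrows : ∏ j ∈ univ.erase t, ∑ ℓ, |H t j ℓ| ≤ 1 :=
      prod_le_one (fun _ _ => sum_nonneg fun _ _ => abs_nonneg _) fun j hj => by
        simp only [H, if_neg (ne_of_mem_erase hj)]
        split_ifs
        exacts [hP j, hQ j]
    exact (mul_le_of_le_one_right (sum_nonneg fun _ _ => abs_nonneg _) hrows).trans hrow_t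
  simp_rw [prod_sub_prod_eq_sum_hybrid, sum_mul]
  rw [sum_comm]
  calc |∑ t, ∑ lam : ι → κ, (∏ j, H t j (lam j)) * w lam|
      ≤ ∑ t, |∑ lam : ι → κ, (∏ j, H t j (lam j)) * w lam| := abs_sum_le_sum_abs _ _
    _ ≤ ∑ _t : ι, (Fintype.card κ * α : ℝ) :=
      sum_le_sum fun t _ => (abs_sum_prod_mul_le_prod_sum_abs _ w hw).trans (hH t)
    _ = Fintype.card ι * Fintype.card κ * α := by
      rw [sum_const, card_univ, nsmul_eq_mul, mul_assoc]

end Multilinear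

lemma abs_rUA_sub_rUA_le {n L : ℕ} {P Q : Fin n → Fin L → ℝ} {α : ℝ}
    (hP : ∀ j, ∑ ℓ, |P j ℓ| ≤ 1) (hQ : ∀ j, ∑ ℓ, |Q j ℓ| ≤ 1)
    (hPQ : ∀ j ℓ, |P j ℓ - Q j ℓ| ≤ α) (i k : Fin n) :
    |rUA P i k - rUA Q i k| ≤ n * L * α := by
  have h := abs_sum_prod_sub_prod_mul_le hP hQ hPQ _ (abs_condRank_le_one · i k)
  rw [Fintype.card_fin, Fintype.card_fin] at h
  simp only [sub_mul, sum_sub_distrib] at h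
  exact h

section Expectation

variable {X : Type*} [Fintype X]

theorem sum_prod_mul_sum_prod_mul_eq {ι κ : Type*} [Fintype ι] [DecidableEq ι] [Fintype κ]
    (D : X → ℝ) (F : ι → X → κ → ℝ) (w : (ι → κ) → ℝ) :
    ∑ xs : ι → X, (∏ j, D (xs j)) * ∑ lam : ι → κ, (∏ j, F j (xs j) (lam j)) * w lam
      = ∑ lam : ι → κ, (∏ j, ∑ x, D x * F j x (lam j)) * w lam := by
  simp_rw [mul_sum]
  rw [sum_comm]
  refine sum_congr rfl fun lam _ => ?_
  rw [Fintype.prod_sum, sum_mul]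
  refine sum_congr rfl fun xs _ => ?_
  rw [prod_mul_distrib]
  ring

variable {n L : ℕ}

/-- The expected prediction matrix with rows `E[F(x_j)]`, except that the draw `x_i` of the
distinguished individual `i` only counts when it satisfies `c`. -/
noncomputable def maskedMean (D : X → ℝ) (c : X → Prop) [DecidablePred c] (i : Fin n)
    (F : X → Fin L → ℝ) : Fin n → Fin L → ℝ :=
  fun j ℓ => ∑ x, D x * if j = i ∧ ¬ c x then 0 else F x ℓ

theorem sum_prod_mul_ite_rUA (D : X → ℝ) (c : X → Prop) [DecidablePred c]
    (F : X → Fin L → ℝ) (i k : Fin n) :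
    ∑ xs : Fin n → X, (∏ j, D (xs j)) * (if c (xs i) then rUA (fun j => F (xs j)) i k else 0)
      = rUA (maskedMean D c i F) i k := by
  have hmask : ∀ xs : Fin n → X, (if c (xs i) then rUA (fun j => F (xs j)) i k else 0)
      = ∑ lam : Fin n → Fin L,
          (∏ j, if j = i ∧ ¬ c (xs j) then 0 else F (xs j) (lam j)) * condRank lam i k := by
    intro xs
    by_cases hc : c (xs i)
    · rw [if_pos hc, rUA]
      refine sum_congr rfl fun lam _ => ?_
      congr 1
      exact prod_congr rfl fun j _ => (if_neg fun h : j = i ∧ ¬ c (xs j) => h.2 (h.1 ▸ hc)).symm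
    · rw [if_neg hc]
      symm
      refine sum_eq_zero fun lam _ => ?_
      rw [Finset.prod_eq_zero (mem_univ i) (by simp [hc]), zero_mul]
  simp_rw [hmask]
  exact sum_prod_mul_sum_prod_mul_eq D (fun j x ℓ => if j = i ∧ ¬ c x then 0 else F x ℓ) _

theorem sum_abs_maskedMean_le_one {D : X → ℝ} (hD0 : ∀ x, 0 ≤ D x) (hD1 : ∑ x, D x = 1)
    (c : X → Prop) [DecidablePred c] (i : Fin n) {F : X → Fin L → ℝ}
    (hF : ∀ x, (∀ ℓ, 0 ≤ F x ℓ) ∧ ∑ ℓ, F x ℓ = 1) (j : Fin n) :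
    ∑ ℓ, |maskedMean D c i F j ℓ| ≤ 1 := by
  have hentry : ∀ x ℓ, 0 ≤ if j = i ∧ ¬ c x then 0 else F x ℓ := fun x ℓ => by
    split_ifs
    exacts [le_rfl, (hF x).1 ℓ]
  have hrow : ∀ x, ∑ ℓ, (if j = i ∧ ¬ c x then 0 else F x ℓ) ≤ 1 := fun x => by
    split_ifs
    exacts [by simp, (hF x).2.le]
  calc ∑ ℓ, |maskedMean D c i F j ℓ|
      = ∑ x, D x * ∑ ℓ, (if j = i ∧ ¬ c x then 0 else F x ℓ) := by
        simp_rw [maskedMean, mul_sum]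
        rw [sum_comm]
        exact sum_congr rfl fun ℓ _ =>
          abs_of_nonneg (sum_nonneg fun x _ => mul_nonneg (hD0 x) (hentry x ℓ))
    _ ≤ ∑ x, D x * 1 := sum_le_sum fun x _ => mul_le_mul_of_nonneg_left (hrow x) (hD0 x)
    _ = 1 := by simp [hD1]

theorem abs_maskedMean_sub_le {D : X → ℝ} {c : X → Prop} [DecidablePred c] {i : Fin n}
    {F G : X → Fin L → ℝ} {α : ℝ}
    (hc : ∀ ℓ, |∑ x, D x * (if c x then F x ℓ - G x ℓ else 0)| ≤ α)
    (hall : ∀ ℓ, |∑ x, D x * (F x ℓ - G x ℓ)| ≤ α) (j : Fin n) (ℓ : Fin L) :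
    |maskedMean D c i F j ℓ - maskedMean D c i G j ℓ| ≤ α := by
  simp only [maskedMean, ← sum_sub_distrib, ← mul_sub, ite_sub_ite, sub_self]
  by_cases hj : j = i
  · simpa [hj, ite_not] using hc ℓ
  · simpa [hj] using hall ℓ

end Expectation

theorem abs_sum_prod_mul_ite_rUA_sub_le {X : Type*} [Fintype X] {n L : ℕ} {D : X → ℝ}
    (hD0 : ∀ x, 0 ≤ D x) (hD1 : ∑ x, D x = 1) {F G : X → Fin L → ℝ}
    (hF : ∀ x, (∀ ℓ, 0 ≤ F x ℓ) ∧ ∑ ℓ, F x ℓ = 1) (hG : ∀ x, (∀ ℓ, 0 ≤ G x ℓ) ∧ ∑ ℓ, G x ℓ = 1)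
    {c : X → Prop} [DecidablePred c] {α : ℝ}
    (hc : ∀ ℓ, |∑ x, D x * (if c x then F x ℓ - G x ℓ else 0)| ≤ α)
    (hall : ∀ ℓ, |∑ x, D x * (F x ℓ - G x ℓ)| ≤ α) (i k : Fin n) :
    |∑ xs : Fin n → X, (∏ j, D (xs j)) *
        (if c (xs i) then rUA (fun j => F (xs j)) i k - rUA (fun j => G (xs j)) i k else 0)|
      ≤ n * L * α := by
  have hsplit (xs : Fin n → X) :
      (if c (xs i) then rUA (fun j => F (xs j)) i k - rUA (fun j => G (xs j)) i k else 0)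
        = (if c (xs i) then rUA (fun j => F (xs j)) i k else 0)
          - (if c (xs i) then rUA (fun j => G (xs j)) i k else 0) := by
    rw [ite_sub_ite, sub_zero]
  simp only [hsplit, mul_sub, sum_sub_distrib, sum_prod_mul_ite_rUA]
  exact abs_rUA_sub_rUA_le (sum_abs_maskedMean_le_one hD0 hD1 c i hF)
    (sum_abs_maskedMean_le_one hD0 hD1 c i hG) (abs_maskedMean_sub_le hc hall) i k

theorem rUA_multicalibration_composition_general
    {X : Type*} [Fintype X] (n L : ℕ)
    (D : X → ℝ) (hD0 : ∀ x, 0 ≤ D x) (hD1 : ∑ x, D x = 1)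
    (fstar f : X → Fin L → ℝ)
    (hfstar : ∀ x : X, (∀ ℓ, 0 ≤ fstar x ℓ) ∧ ∑ ℓ, fstar x ℓ = 1)
    (hf : ∀ x : X, (∀ ℓ, 0 ≤ f x ℓ) ∧ ∑ ℓ, f x ℓ = 1)
    (𝒞 : Set (Set X)) (α : ℝ) (m : ℕ)
    (hMC : ∀ S ∈ 𝒞, ∀ jvec : Fin L → Fin m, ∀ ℓ : Fin L,
      |∑ x, D x *
          (if x ∈ S ∧ (∀ ℓ' : Fin L,
                ((jvec ℓ' : ℕ) : ℝ) * (1 / (m : ℝ)) ≤ f x ℓ' ∧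
                  f x ℓ' < (((jvec ℓ' : ℕ) : ℝ) + 1) * (1 / (m : ℝ)))
            then fstar x ℓ - f x ℓ else 0)| ≤ α)
    (hMA : ∀ ℓ : Fin L, |∑ x, D x * (fstar x ℓ - f x ℓ)| ≤ α) :
    ∀ S ∈ 𝒞, ∀ jvec : Fin L → Fin m, ∀ k : Fin n,
      |∑ xs : Fin n → X, (∏ j, D (xs j)) *
          ((1 / (n : ℝ)) * ∑ i,
            (if xs i ∈ S ∧ (∀ ℓ' : Fin L,
                  ((jvec ℓ' : ℕ) : ℝ) * (1 / (m : ℝ)) ≤ f (xs i) ℓ' ∧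
                    f (xs i) ℓ' < (((jvec ℓ' : ℕ) : ℝ) + 1) * (1 / (m : ℝ)))
              then
                rUA (fun j => fstar (xs j)) i k - rUA (fun j => f (xs j)) i k
              else 0))|
        ≤ L * n * α := by
  intro S hS jvec k
  have hterm := fun i =>
    abs_sum_prod_mul_ite_rUA_sub_le hD0 hD1 hfstar hf (hMC S hS jvec) hMA i k
  rcases Nat.eq_zero_or_pos n with rfl | hn
  · simp
  simp_rw [mul_left_comm _ (1 / (n : ℝ)), ← mul_sum, abs_mul, mul_sum]
  rw [sum_comm, abs_of_pos (by positivity)]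
  calc (1 / (n : ℝ)) * |_| ≤ (1 / (n : ℝ)) * ∑ _i : Fin n, (n * L * α : ℝ) :=
        mul_le_mul_of_nonneg_left ((abs_sum_le_sum_abs _ _).trans (sum_le_sum fun i _ => hterm i))
          (by positivity)
    _ = L * n * α := by
        rw [sum_const, card_univ, Fintype.card_fin, nsmul_eq_mul]
        field_simp

/-- If `f` is `(𝒞, α, δ)`-multicalibrated (with `δ = 1/m`)
and `({X}, α)`-multiaccurate with respect to the ground truth `fstar`, then
for every group `S ∈ 𝒞`, every level-set vector `jvec ∈ {0, …, m−1}^L`, and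
every position `k`, the expected difference between the UA rank-`k`
probabilities under the ground truth and under `f`, restricted to sampled
individuals in `S` whose predictions fall in the `jvec` bins, is at most
`L · n · α`. -/
theorem rUA_multicalibration_composition
    {X : Type*} [Fintype X] (n L : ℕ) (hn : 1 ≤ n)
    (D : X → ℝ) (hD0 : ∀ x, 0 ≤ D x) (hD1 : ∑ x, D x = 1)
    (fstar f : X → Fin L → ℝ)
    (hfstar : ∀ x : X, (∀ ℓ, 0 ≤ fstar x ℓ) ∧ ∑ ℓ, fstar x ℓ = 1)
    (hf : ∀ x : X, (∀ ℓ, 0 ≤ f x ℓ) ∧ ∑ ℓ, f x ℓ = 1)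
    (𝒞 : Set (Set X)) (α : ℝ) (m : ℕ) (hm : 1 ≤ m)
    (hMC : ∀ S ∈ 𝒞, ∀ jvec : Fin L → Fin m, ∀ ℓ : Fin L,
      |∑ x, D x *
          (if x ∈ S ∧ (∀ ℓ' : Fin L,
                ((jvec ℓ' : ℕ) : ℝ) * (1 / (m : ℝ)) ≤ f x ℓ' ∧
                  f x ℓ' < (((jvec ℓ' : ℕ) : ℝ) + 1) * (1 / (m : ℝ)))
            then fstar x ℓ - f x ℓ else 0)| ≤ α)
    (hMA : ∀ ℓ : Fin L, |∑ x, D x * (fstar x ℓ - f x ℓ)| ≤ α) :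
    ∀ S ∈ 𝒞, ∀ jvec : Fin L → Fin m, ∀ k : Fin n,
      |∑ xs : Fin n → X, (∏ j, D (xs j)) *
          ((1 / (n : ℝ)) * ∑ i,
            (if xs i ∈ S ∧ (∀ ℓ' : Fin L,
                  ((jvec ℓ' : ℕ) : ℝ) * (1 / (m : ℝ)) ≤ f (xs i) ℓ' ∧
                    f (xs i) ℓ' < (((jvec ℓ' : ℕ) : ℝ) + 1) * (1 / (m : ℝ)))
              then
                rUA (fun j => fstar (xs j)) i k - rUA (fun j => f (xs j)) i k
              else 0))|
        ≤ L * n * α :=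
  rUA_multicalibration_composition_general n L D hD0 hD1 fstar f hfstar hf 𝒞 α m hMC hMA
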